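/- Let A=(I,O,L,S,E) be an ilsADMG. Then there exists exactly one iMAG M that represents A; it is denoted MAG(A). Explicitly, M has input nodes I and output nodes O; distinct a,b∈I∪O are adjacent in M iff {a,b}⊄I and there is an (L,S)-inducing path between a and b in A; and on each edge the mark at a is a tail if a∈Anc_A({b}∪S) and an arrowhead otherwise. -/

import Mathlib

noncomputable section
open Classical

/-- Edge-endpoint marks: tail `−`, arrowhead `>`, or circle `∘`. -/
inductive Mark : Type
  | tail
  | arrow
  | circle
  deriving DecidableEq

/-- A mixed graph with input nodes over a node type `N`, as raw data.
`mark a b` is the mark at `a` on the (unique) edge between `a` and `b`,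
or `none` if there is no edge between `a` and `b`. -/
structure MixedGraph (N : Type) where
  inputs : Set N
  outputs : Set N
  mark : N → N → Option Mark

namespace MixedGraph

variable {N N' : Type}

/-- All nodes of the graph. -/
def nodes (G : MixedGraph N) : Set N := G.inputs ∪ G.outputs

/-- `a` and `b` are adjacent (joined by an edge). -/
def adj (G : MixedGraph N) (a b : N) : Prop := (G.mark a b).isSome

/-- Directed edge `a → b`: tail at `a`, arrowhead at `b`. -/
def dir (G : MixedGraph N) (a b : N) : Prop :=
  G.mark a b = some Mark.tail ∧ G.mark b a = some Mark.arrow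

/-- Bidirected edge `a ↔ b`. -/
def bidir (G : MixedGraph N) (a b : N) : Prop :=
  G.mark a b = some Mark.arrow ∧ G.mark b a = some Mark.arrow

/-- Undirected edge `a − b`. -/
def undir (G : MixedGraph N) (a b : N) : Prop :=
  G.mark a b = some Mark.tail ∧ G.mark b a = some Mark.tail

/-- Edge `a ∘→ b`: circle at `a`, arrowhead at `b`. -/
def circArrow (G : MixedGraph N) (a b : N) : Prop :=
  G.mark a b = some Mark.circle ∧ G.mark b a = some Mark.arrow

/-- Edge `a ∘−∘ b`: circles at both ends. -/
def circCirc (G : MixedGraph N) (a b : N) : Prop :=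
  G.mark a b = some Mark.circle ∧ G.mark b a = some Mark.circle

/-- Edge `a ∘− b`: circle at `a`, tail at `b`. -/
def circTail (G : MixedGraph N) (a b : N) : Prop :=
  G.mark a b = some Mark.circle ∧ G.mark b a = some Mark.tail

/-- Edge `a −∘ b`: tail at `a`, circle at `b`. -/
def tailCirc (G : MixedGraph N) (a b : N) : Prop :=
  G.mark a b = some Mark.tail ∧ G.mark b a = some Mark.circle

/-- Some edge of `G` carries an arrowhead at `a`. -/
def arrowAt (G : MixedGraph N) (a : N) : Prop :=
  ∃ b, G.mark a b = some Mark.arrow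

/-- `a` is an ancestor of `b`: `a = b` or a directed path `a → ⋯ → b` exists. -/
def anc (G : MixedGraph N) : N → N → Prop := Relation.ReflTransGen G.dir

/-- The ancestors of a set `S` of nodes. -/
def ancSet (G : MixedGraph N) (S : Set N) : Set N := {a | ∃ s ∈ S, G.anc a s}

/-- Potentially directed edge from `a` towards `b`: an edge with no arrowhead at its
earlier endpoint `a` and no tail at its later endpoint `b`. -/
def potDir (G : MixedGraph N) (a b : N) : Prop :=
  G.adj a b ∧ G.mark a b ≠ some Mark.arrow ∧ G.mark b a ≠ some Mark.tail

/-- `a` is a possible ancestor of `b`: `a = b` or a potentially directed path runs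
from `a` to `b`. -/
def poAn (G : MixedGraph N) : N → N → Prop := Relation.ReflTransGen G.potDir

/-- The possible ancestors of a set `S` of nodes. -/
def poAnSet (G : MixedGraph N) (S : Set N) : Set N := {a | ∃ s ∈ S, G.poAn a s}

/-- Well-formedness of a mixed graph with input nodes: inputs and outputs are disjoint
finite sets, edges are symmetric and irreflexive and join nodes of the graph. -/
def WF (G : MixedGraph N) : Prop :=
  Disjoint G.inputs G.outputs ∧ G.inputs.Finite ∧ G.outputs.Finite ∧
  (∀ a b, (G.mark a b).isSome → (G.mark b a).isSome) ∧
  (∀ a, G.mark a a = none) ∧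
  (∀ a b, (G.mark a b).isSome → a ∈ G.nodes ∧ b ∈ G.nodes)

/-- The induced subgraph of `G` over the node set `A`. -/
def induce (G : MixedGraph N) (A : Set N) : MixedGraph N where
  inputs := G.inputs ∩ A
  outputs := G.outputs ∩ A
  mark := fun a b => if a ∈ A ∧ b ∈ A then G.mark a b else none

/-- Transport a mixed graph over `N` to one over `N ⊕ N'` along `Sum.inl`. -/
def sumInl (G : MixedGraph N) : MixedGraph (N ⊕ N') where
  inputs := Sum.inl '' G.inputs
  outputs := Sum.inl '' G.outputs
  mark := fun x y =>
    match x, y with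
    | Sum.inl a, Sum.inl b => G.mark a b
    | _, _ => none

/-- `G` is a subgraph of `H`: its nodes and marked edges are among those of `H`. -/
def Subgraph (G H : MixedGraph N) : Prop :=
  G.inputs ⊆ H.inputs ∧ G.outputs ⊆ H.outputs ∧
  ∀ a b m, G.mark a b = some m → H.mark a b = some m

end MixedGraph

/-- A walk in `G` with `len` edges, visiting the nodes `f 0, …, f len`
(consecutive nodes are adjacent). -/
structure GWalk {N : Type} (G : MixedGraph N) where
  len : ℕ
  f : ℕ → N
  hadj : ∀ i < len, G.adj (f i) (f (i + 1))

namespace GWalk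

variable {N : Type} {G : MixedGraph N}

/-- The first node of the walk. -/
def first (w : GWalk G) : N := w.f 0

/-- The last node of the walk. -/
def last (w : GWalk G) : N := w.f w.len

/-- The walk is a path: no repeated nodes. -/
def IsPath (w : GWalk G) : Prop :=
  ∀ i ≤ w.len, ∀ j ≤ w.len, w.f i = w.f j → i = j

/-- The (interior) node at position `i` is a collider on the walk: both incident
edges carry arrowheads at it. -/
def ColliderAt (w : GWalk G) (i : ℕ) : Prop :=
  G.mark (w.f i) (w.f (i - 1)) = some Mark.arrow ∧
  G.mark (w.f i) (w.f (i + 1)) = some Mark.arrow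

end GWalk

namespace MixedGraph

variable {N : Type}

/-- `w` is an `(L,S)`-inducing walk: every non-endnode is in `L` or a collider, and
every collider lies in `Anc({first, last} ∪ S)`. -/
def InducingWalk (G : MixedGraph N) (L S : Set N) (w : GWalk G) : Prop :=
  (∀ i, 0 < i → i < w.len → w.f i ∈ L ∨ w.ColliderAt i) ∧
  (∀ i, 0 < i → i < w.len → w.ColliderAt i →
    w.f i ∈ G.ancSet ({w.first, w.last} ∪ S))

/-- There is an `(L,S)`-inducing walk from `a` to `b` in `G`. -/
def InducingWalkBtw (G : MixedGraph N) (L S : Set N) (a b : N) : Prop :=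
  ∃ w : GWalk G, w.first = a ∧ w.last = b ∧ G.InducingWalk L S w

/-- There is an `(L,S)`-inducing path from `a` to `b` in `G`. -/
def InducingPathBtw (G : MixedGraph N) (L S : Set N) (a b : N) : Prop :=
  ∃ w : GWalk G, w.IsPath ∧ w.first = a ∧ w.last = b ∧ G.InducingWalk L S w

/-- `G` is an iADMG: all edges directed or bidirected, no directed cycles, no
arrowheads at input nodes, and no edges between two input nodes. -/
def IsIADMG (G : MixedGraph N) : Prop :=
  G.WF ∧
  (∀ a b, G.adj a b → G.dir a b ∨ G.dir b a ∨ G.bidir a b) ∧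
  (∀ a b, G.dir a b → ¬ G.anc b a) ∧
  (∀ a ∈ G.inputs, ∀ b, G.mark a b ≠ some Mark.arrow) ∧
  (∀ a ∈ G.inputs, ∀ b ∈ G.inputs, ¬ G.adj a b)

/-- `G` is an iPAG. -/
def IsIPAG (G : MixedGraph N) : Prop :=
  G.WF ∧
  (∀ a ∈ G.inputs, ∀ b, G.mark a b ≠ some Mark.arrow) ∧
  (∀ a ∈ G.inputs, ∀ b ∈ G.inputs, ¬ G.adj a b) ∧
  (∀ a b, G.dir a b → ¬ G.anc b a) ∧
  (∀ a b, G.anc a b → ¬ G.bidir b a) ∧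
  (∀ a b c, G.mark b a = some Mark.arrow → ¬ G.undir b c) ∧
  (∀ a b, a ≠ b → a ∈ G.nodes → b ∈ G.nodes → ¬ G.adj a b →
    ¬ G.InducingPathBtw ∅ ∅ a b)

/-- `G` is an iMAG: an iPAG with no circle marks. -/
def IsIMAG (G : MixedGraph N) : Prop :=
  G.IsIPAG ∧ ∀ a b, G.mark a b ≠ some Mark.circle

/-- The visibility condition for a directed edge `a → b` of `G`: either `a` is an
input node, or some node `c` not adjacent to `b` satisfies `c *→ a`, or there is a
path `c *→ v₁ ↔ ⋯ ↔ v_{n−1} ↔ a` (`n ≥ 2`) with every `vᵢ` a parent of `b`. -/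
def VisibleCond (G : MixedGraph N) (a b : N) : Prop :=
  a ∈ G.inputs ∨
  ∃ c, c ≠ b ∧ ¬ G.adj c b ∧
    (G.mark a c = some Mark.arrow ∨
      ∃ w : GWalk G, w.IsPath ∧ 2 ≤ w.len ∧ w.first = c ∧ w.last = a ∧
        G.mark (w.f 1) (w.f 0) = some Mark.arrow ∧
        (∀ i, 1 ≤ i → i < w.len → G.bidir (w.f i) (w.f (i + 1))) ∧
        (∀ i, 1 ≤ i → i < w.len → G.dir (w.f i) b))

/-- `a → b` is a visible directed edge of `G`. -/
def VisibleDir (G : MixedGraph N) (a b : N) : Prop :=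
  G.dir a b ∧ G.VisibleCond a b

/-- `a` and `b` are in the same bucket of `G`: some path between them carries no
arrowhead mark on any of its edges. -/
def SameBucket (G : MixedGraph N) (a b : N) : Prop :=
  ∃ w : GWalk G, w.IsPath ∧ w.first = a ∧ w.last = b ∧
    ∀ i < w.len, G.mark (w.f i) (w.f (i + 1)) ≠ some Mark.arrow ∧
      G.mark (w.f (i + 1)) (w.f i) ≠ some Mark.arrow

end MixedGraph

/-- An isADMG: an iADMG together with its set `sel` of latent selection nodes.
The observed output nodes are `graph.outputs \ sel`. -/
structure SADMG (N : Type) where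
  graph : MixedGraph N
  sel : Set N

namespace SADMG

/-- Well-formedness of an isADMG. -/
def WF {N : Type} (A : SADMG N) : Prop :=
  A.graph.IsIADMG ∧ A.sel ⊆ A.graph.outputs

/-- The observed output nodes `O`. -/
def obs {N : Type} (A : SADMG N) : Set N := A.graph.outputs \ A.sel

end SADMG

/-- An ilsADMG: an iADMG together with its sets of latent output nodes and of
latent selection nodes.  The observed output nodes are the remaining outputs. -/
structure LSADMG (N : Type) where
  graph : MixedGraph N
  latent : Set N
  sel : Set N

namespace LSADMG

/-- Well-formedness of an ilsADMG. -/
def WF {N : Type} (A : LSADMG N) : Prop :=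
  A.graph.IsIADMG ∧ A.latent ⊆ A.graph.outputs ∧ A.sel ⊆ A.graph.outputs ∧
  Disjoint A.latent A.sel

/-- The observed output nodes `O`. -/
def obs {N : Type} (A : LSADMG N) : Set N := A.graph.outputs \ (A.latent ∪ A.sel)

end LSADMG

/-- An iPAG/iMAG `P` represents the isADMG `A`: nodes match; adjacency in `P`
corresponds exactly to `S`-inducing paths in `A` (with no edges inside the inputs);
arrowheads at `a` imply `a ∉ Anc_A({b} ∪ S)`; tails at `a` imply `a ∈ Anc_A({b} ∪ S)`. -/
def RepresentsS {N : Type} (P : MixedGraph N) (A : SADMG N) : Prop :=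
  P.inputs = A.graph.inputs ∧
  P.outputs = A.obs ∧
  (∀ a b, a ≠ b → a ∈ P.nodes → b ∈ P.nodes →
    (P.adj a b ↔
      (¬(a ∈ P.inputs ∧ b ∈ P.inputs) ∧ A.graph.InducingPathBtw ∅ A.sel a b))) ∧
  (∀ a b, P.mark a b = some Mark.arrow → a ∉ A.graph.ancSet ({b} ∪ A.sel)) ∧
  (∀ a b, P.mark a b = some Mark.tail → a ∈ A.graph.ancSet ({b} ∪ A.sel))

/-- An iPAG/iMAG `P` `(L,S)`-represents the ilsADMG `A`. -/
def RepresentsLS {N : Type} (P : MixedGraph N) (A : LSADMG N) : Prop :=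
  P.inputs = A.graph.inputs ∧
  P.outputs = A.obs ∧
  (∀ a b, a ≠ b → a ∈ P.nodes → b ∈ P.nodes →
    (P.adj a b ↔
      (¬(a ∈ P.inputs ∧ b ∈ P.inputs) ∧ A.graph.InducingPathBtw A.latent A.sel a b))) ∧
  (∀ a b, P.mark a b = some Mark.arrow → a ∉ A.graph.ancSet ({b} ∪ A.sel)) ∧
  (∀ a b, P.mark a b = some Mark.tail → a ∈ A.graph.ancSet ({b} ∪ A.sel))

/-- The explicit candidate for `MAG(A)` of an ilsADMG `A`: input nodes `I`, output
nodes `O`; distinct `a,b ∈ I ∪ O` adjacent iff `{a,b} ⊄ I` and there is an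
`(L,S)`-inducing path between them in `A`; the mark at `a` on each edge is a tail
if `a ∈ Anc_A({b} ∪ S)` and an arrowhead otherwise. -/
def magOfLS {N : Type} (A : LSADMG N) : MixedGraph N where
  inputs := A.graph.inputs
  outputs := A.obs
  mark := fun a b =>
    if a ≠ b ∧ a ∈ A.graph.inputs ∪ A.obs ∧ b ∈ A.graph.inputs ∪ A.obs ∧
        ¬(a ∈ A.graph.inputs ∧ b ∈ A.graph.inputs) ∧
        A.graph.InducingPathBtw A.latent A.sel a b then
      (if a ∈ A.graph.ancSet ({b} ∪ A.sel) then some Mark.tail else some Mark.arrow)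
    else none

/-- A walk is `C`-open (in a graph without circle marks): its endnodes are not in
`C`, no non-collider on it is in `C`, and every collider on it is in `Anc(C)`. -/
def COpen {N : Type} (H : MixedGraph N) (C : Set N) (w : GWalk H) : Prop :=
  w.first ∉ C ∧ w.last ∉ C ∧
  ∀ i, 0 < i → i < w.len →
    (¬ w.ColliderAt i → w.f i ∉ C) ∧ (w.ColliderAt i → w.f i ∈ H.ancSet C)

/-- `A` is id-separated from `B` given `C` in `H` (graphs without circle marks):
every path/walk from a node of `A` to a node of `B ∪ inputs` is not `C`-open. -/
def IdSepSimple {N : Type} (H : MixedGraph N) (A B C : Set N) : Prop :=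
  ∀ w : GWalk H, w.first ∈ A → w.last ∈ B ∪ H.inputs → ¬ COpen H C w

/-- A walk in a manipulated graph `H` (with set `DI` of regime input nodes) is
`C`-id-open. -/
def IdOpen {N : Type} (H : MixedGraph N) (DI C : Set N) (w : GWalk H) : Prop :=
  w.first ∉ C ∧ w.last ∉ C ∧
  ∀ i, 0 < i → i < w.len →
    (w.f i ∉ C ∧ (H.mark (w.f i) (w.f (i - 1)) = some Mark.tail ∨
        H.mark (w.f i) (w.f (i + 1)) = some Mark.tail)) ∨
    (w.f i ∉ C ∧ H.mark (w.f i) (w.f (i - 1)) = some Mark.circle ∧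
        H.mark (w.f i) (w.f (i + 1)) = some Mark.circle ∧
        ¬ H.adj (w.f (i - 1)) (w.f (i + 1))) ∨
    (w.ColliderAt i ∧ w.f (i - 1) ∉ DI ∧ w.f i ∉ DI ∧ w.f (i + 1) ∉ DI ∧
        w.f i ∈ H.ancSet C) ∨
    (w.ColliderAt i ∧ ¬(w.f (i - 1) ∉ DI ∧ w.f i ∉ DI ∧ w.f (i + 1) ∉ DI) ∧
        w.f i ∈ H.poAnSet (C ∩ H.outputs)) ∨
    (w.f (i - 1) ∈ DI ∧ H.mark (w.f i) (w.f (i - 1)) = some Mark.circle ∧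
        H.mark (w.f i) (w.f (i + 1)) = some Mark.arrow ∧
        w.f i ∈ H.poAnSet (C ∩ H.outputs)) ∨
    (w.f (i + 1) ∈ DI ∧ H.mark (w.f i) (w.f (i - 1)) = some Mark.arrow ∧
        H.mark (w.f i) (w.f (i + 1)) = some Mark.circle ∧
        w.f i ∈ H.poAnSet (C ∩ H.outputs))

/-- `A` is id-separated from `B` given `C` in the manipulated graph `H`, whose set
of regime input nodes is `DI`: every path/walk from a node of `A` to a node of
`B ∪ inputs` is not `C`-id-open. -/
def IdSep {N : Type} (H : MixedGraph N) (DI A B C : Set N) : Prop :=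
  ∀ w : GWalk H, w.first ∈ A → w.last ∈ B ∪ H.inputs → ¬ IdOpen H DI C w

/-- Hard manipulation `do(T)` of an isADMG-type graph: reclassify the nodes of `T`
as input nodes and delete every edge with an arrowhead at a node of `T`. -/
def admgHardManip {N : Type} (G : MixedGraph N) (T : Set N) : MixedGraph N where
  inputs := G.inputs ∪ (T ∩ G.outputs)
  outputs := G.outputs \ T
  mark := fun x y =>
    if (x ∈ T ∧ G.mark x y = some Mark.arrow) ∨
        (y ∈ T ∧ G.mark y x = some Mark.arrow) then none
    else G.mark x y

/-- Soft manipulation `do(I_D)` of an isADMG-type graph: add a fresh input node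
`I_d = Sum.inr d` and the directed edge `I_d → d` for each `d ∈ D`. -/
def admgSoftManip {N : Type} (G : MixedGraph N) (D : Set N) : MixedGraph (N ⊕ N) where
  inputs := Sum.inl '' G.inputs ∪ Sum.inr '' D
  outputs := Sum.inl '' G.outputs
  mark := fun x y =>
    match x, y with
    | Sum.inl a, Sum.inl b => G.mark a b
    | Sum.inr d, Sum.inl a => if d ∈ D ∧ a = d then some Mark.tail else none
    | Sum.inl a, Sum.inr d => if d ∈ D ∧ a = d then some Mark.arrow else none
    | Sum.inr _, Sum.inr _ => none

/-- Soft manipulation of an isADMG. -/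
def SADMG.softManip {N : Type} (A : SADMG N) (D : Set N) : SADMG (N ⊕ N) where
  graph := admgSoftManip A.graph D
  sel := Sum.inl '' A.sel

/-- Hard manipulation `do(T)` of an iMAG-type graph: input nodes `I ∪ (T ∩ V)`,
output nodes `V \ T`; delete all edges with an arrowhead at a node of `T \ I` and
all edges between two nodes of `T ∪ I`. -/
def magHardManip {N : Type} (G : MixedGraph N) (T : Set N) : MixedGraph N where
  inputs := G.inputs ∪ (T ∩ G.outputs)
  outputs := G.outputs \ T
  mark := fun x y =>
    if (x ∈ T ∧ x ∉ G.inputs ∧ G.mark x y = some Mark.arrow) ∨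
        (y ∈ T ∧ y ∉ G.inputs ∧ G.mark y x = some Mark.arrow) ∨
        ((x ∈ T ∨ x ∈ G.inputs) ∧ (y ∈ T ∨ y ∈ G.inputs)) then none
    else G.mark x y

/-- The mark at node `y` on the new edge between the regime node `I_a = Sum.inr a`
and `y` in the soft manipulation of an iMAG-type graph `G` over `N ⊕ N`
(`none` if there is no such edge): `I_a → a` if some edge of `G` has an arrowhead
at `a`; `I_a − a` if some undirected edge is at `a`; `I_a −∘ a` otherwise;
`I_a → b` for every output `b` with `a → b` invisible; `I_a − b` for every output
`b` with `a − b` in `G`. -/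
def magSoftTarget {N : Type} (G : MixedGraph (N ⊕ N)) (a : N) (y : N ⊕ N) : Option Mark :=
  if y = Sum.inl a then
    (if G.arrowAt (Sum.inl a) then some Mark.arrow
     else if ∃ c, G.undir (Sum.inl a) c then some Mark.tail
     else some Mark.circle)
  else if y ∈ G.outputs ∧ G.dir (Sum.inl a) y ∧ ¬ G.VisibleCond (Sum.inl a) y then
    some Mark.arrow
  else if y ∈ G.outputs ∧ G.undir (Sum.inl a) y then some Mark.tail
  else none

/-- The mark at node `y` on the new edge between the regime node `I_a = Sum.inr a`
and `y` in the soft manipulation of an iPAG-type graph `G` over `N ⊕ N`. -/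
def pagSoftTarget {N : Type} (G : MixedGraph (N ⊕ N)) (a : N) (y : N ⊕ N) : Option Mark :=
  if y = Sum.inl a then
    (if G.arrowAt (Sum.inl a) then some Mark.arrow
     else if ∃ c, G.undir (Sum.inl a) c then some Mark.tail
     else some Mark.circle)
  else if y ∈ G.outputs ∧ ((G.dir (Sum.inl a) y ∧ ¬ G.VisibleCond (Sum.inl a) y) ∨
      G.circArrow (Sum.inl a) y) then some Mark.arrow
  else if y ∈ G.outputs ∧ (G.undir (Sum.inl a) y ∨
      (G.circTail (Sum.inl a) y ∧ ∃ c, G.undir c y)) then some Mark.tail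
  else if y ∈ G.outputs ∧ (G.tailCirc (Sum.inl a) y ∨ G.circCirc (Sum.inl a) y ∨
      (G.circTail (Sum.inl a) y ∧ ¬ ∃ c, G.undir c y)) then some Mark.circle
  else none

/-- Generic soft-manipulation step on a graph over `N ⊕ N`: for each `a ∈ A` not
already an input, the regime node `I_a = Sum.inr a` is added as an input node,
with edges (and end marks) prescribed by `target`; the mark at `I_a` on each new
edge is a tail. -/
def softManipStep {N : Type}
    (target : MixedGraph (N ⊕ N) → N → (N ⊕ N) → Option Mark)
    (G : MixedGraph (N ⊕ N)) (A : Set N) : MixedGraph (N ⊕ N) where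
  inputs := G.inputs ∪ Sum.inr '' {a | a ∈ A ∧ Sum.inl a ∉ G.inputs}
  outputs := G.outputs
  mark := fun x y =>
    match x, y with
    | Sum.inr a, Sum.inr b =>
        if a ∈ A ∧ Sum.inl a ∉ G.inputs then
          (if (target G a (Sum.inr b)).isSome then some Mark.tail else none)
        else if b ∈ A ∧ Sum.inl b ∉ G.inputs then target G b (Sum.inr a)
        else G.mark x y
    | Sum.inr a, Sum.inl v =>
        if a ∈ A ∧ Sum.inl a ∉ G.inputs then
          (if (target G a (Sum.inl v)).isSome then some Mark.tail else none)
        else G.mark x y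
    | Sum.inl v, Sum.inr a =>
        if a ∈ A ∧ Sum.inl a ∉ G.inputs then target G a (Sum.inl v)
        else G.mark x y
    | Sum.inl _, Sum.inl _ => G.mark x y

/-- Soft-manipulation step for iMAG-type graphs over `N ⊕ N`. -/
def magSoftManipStep {N : Type} (G : MixedGraph (N ⊕ N)) (A : Set N) :
    MixedGraph (N ⊕ N) :=
  softManipStep magSoftTarget G A

/-- The soft-manipulated iMAG `M_{do(I_A)}`, over node type `N ⊕ N`. -/
def magSoftManip {N : Type} (M : MixedGraph N) (A : Set N) : MixedGraph (N ⊕ N) :=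
  magSoftManipStep M.sumInl A

/-- The soft-manipulated iPAG `P_{do(I_A)}`, over node type `N ⊕ N`. -/
def pagSoftManip {N : Type} (P : MixedGraph N) (A : Set N) : MixedGraph (N ⊕ N) :=
  softManipStep pagSoftTarget P.sumInl A

/-- Hard manipulation `do(T)` of an iPAG-type graph: as for iMAGs, but in addition
every remaining circle mark at a manipulated node is replaced by a tail. -/
def pagHardManip {N : Type} (G : MixedGraph N) (T : Set N) : MixedGraph N where
  inputs := G.inputs ∪ T
  outputs := G.outputs \ T
  mark := fun x y =>
    if (x ∈ T ∧ x ∉ G.inputs ∧ G.mark x y = some Mark.arrow) ∨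
        (y ∈ T ∧ y ∉ G.inputs ∧ G.mark y x = some Mark.arrow) ∨
        ((x ∈ T ∨ x ∈ G.inputs) ∧ (y ∈ T ∨ y ∈ G.inputs)) then none
    else if x ∈ T ∧ x ∉ G.inputs ∧ y ∈ G.outputs ∧ y ∉ T ∧
        G.mark x y = some Mark.circle then some Mark.tail
    else G.mark x y

/-- Orient all circle marks of `G` as tails. -/
def orientCirclesTails {N : Type} (G : MixedGraph N) : MixedGraph N :=
  { G with
    mark := fun x y =>
      (G.mark x y).map (fun m => if m = Mark.circle then Mark.tail else m) }

/-- There is a pc-connecting path from `a` to `b` in `G`: a single edge between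
`a` and `b` that is not a visible directed edge, or a path
`a *→ v₁ ↔ ⋯ ↔ v_{n−1} ←* b` (`n > 1`) none of whose edges is visible directed. -/
def PcConn {N : Type} (G : MixedGraph N) (a b : N) : Prop :=
  (G.adj a b ∧ ¬ G.VisibleDir a b ∧ ¬ G.VisibleDir b a) ∨
  (∃ w : GWalk G, w.IsPath ∧ 1 < w.len ∧ w.first = a ∧ w.last = b ∧
    G.mark (w.f 1) (w.f 0) = some Mark.arrow ∧
    G.mark (w.f (w.len - 1)) (w.f w.len) = some Mark.arrow ∧
    (∀ i, 1 ≤ i → i < w.len - 1 → G.bidir (w.f i) (w.f (i + 1))) ∧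
    (∀ i < w.len, ¬ G.VisibleDir (w.f i) (w.f (i + 1)) ∧
      ¬ G.VisibleDir (w.f (i + 1)) (w.f i)))

/-- The pc-component of `b` in `G`. -/
def pcSet {N : Type} (G : MixedGraph N) (b : N) : Set N := {a | PcConn G a b}

/-- The region of a set `B` in `G`: all nodes in the bucket of some node
pc-connected to a node of `B`. -/
def regionSet {N : Type} (G : MixedGraph N) (B : Set N) : Set N :=
  {a | ∃ b ∈ B, ∃ c, PcConn G c b ∧ G.SameBucket a c}

/-- `S` is a bucket of `G`. -/
def IsBucket {N : Type} (G : MixedGraph N) (S : Set N) : Prop :=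
  ∃ a ∈ G.nodes, S = {x | G.SameBucket x a}

/-- FCI rule R1 (closure form): if `k *→ j` with the edge between `j` and `i`
carrying a circle at `j`, `i` and `k` non-adjacent and `i` not an input node,
then that edge is `j → i`. -/
def FciR1 {N : Type} (P : MixedGraph N) : Prop :=
  ∀ i j k, P.mark j k = some Mark.arrow → ¬ P.adj i k → i ∉ P.inputs →
    P.mark j i = some Mark.circle → P.dir j i

/-- FCI rule R2 (closure form): if `i → j *→ k` or `i *→ j → k` with the edge
between `i` and `k` carrying a circle at `k`, then that edge has an arrowhead at `k`. -/
def FciR2 {N : Type} (P : MixedGraph N) : Prop :=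
  ∀ i j k, ((P.dir i j ∧ P.mark k j = some Mark.arrow) ∨
      (P.mark j i = some Mark.arrow ∧ P.dir j k)) →
    P.mark k i = some Mark.circle → P.mark k i = some Mark.arrow

/-- FCI rule R4 (closure form): for every discriminating path `⟨a,…,y,z⟩` for `y`,
the mark at `y` on the edge between `y` and `z` is not a circle. -/
def FciR4 {N : Type} (P : MixedGraph N) : Prop :=
  ∀ w : GWalk P, w.IsPath → 3 ≤ w.len → ¬ P.adj (w.f 0) (w.f w.len) →
    (∀ i, 0 < i → i < w.len - 1 → w.ColliderAt i ∧ P.dir (w.f i) (w.f w.len)) →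
    P.mark (w.f (w.len - 1)) (w.f w.len) ≠ some Mark.circle

/-- Property (P2) of iSOPAGs: no `a *→ b` together with `b −∘ c`, and no
`a *→ b` together with `b ∘− c`. -/
def SopagP2 {N : Type} (P : MixedGraph N) : Prop :=
  ∀ a b c, P.mark b a = some Mark.arrow → ¬ P.tailCirc b c ∧ ¬ P.circTail b c

/-- Property (P3) of iSOPAGs: if `a *→ b` and the edge between `b` and `c` has a
circle at `b`, then `a *→ c`. -/
def SopagP3 {N : Type} (P : MixedGraph N) : Prop :=
  ∀ a b c, P.mark b a = some Mark.arrow → P.mark b c = some Mark.circle →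
    P.mark c a = some Mark.arrow

/-- `P` is an iSOPAG: an iPAG representing some isADMG, closed under the FCI
orientation rules (R1, R2, R4), and satisfying (P2) and (P3). -/
def IsISOPAG {N : Type} (P : MixedGraph N) : Prop :=
  P.IsIPAG ∧ (∃ A : SADMG N, A.WF ∧ RepresentsS P A) ∧
  FciR1 P ∧ FciR2 P ∧ FciR4 P ∧ SopagP2 P ∧ SopagP3 P


/-!
Any well-formed graph `P` that represents `A` is an iPAG, and without circle marks it is
determined by `A`: adjacencies are given by the `(L,S)`-inducing paths and every mark by
ancestry in `A`. Since `magOfLS A` represents `A` by construction, it is the unique iMAG.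

The ancestral conditions hold because tails and arrowheads of `P` record ancestry in `A`.
For maximality, chase directed edges along an `(L,S)`-inducing path from `x` to `y` that
starts with `x → ·`: the chase stops at `y` or at a collider, which lies in
`Anc({x, y} ∪ S)`; being a descendant of `x` other than `x`, it is not an ancestor of `x`
by acyclicity, so `x ∈ Anc({y} ∪ S)`. Hence on an inducing path
`a *→ v₁ ↔ ⋯ ↔ vₙ₋₁ ←* b` of `P`, each edge `vᵢ vᵢ₊₁` is realised by an inducing path of
`A` entering and leaving every `vᵢ` with an arrowhead. Glued together they give an
`(L,S)`-inducing walk from `a` to `b`, which shortens to a path, so `a` and `b` are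
adjacent in `P`.
-/

namespace GWalk

variable {N : Type} {G : MixedGraph N}

lemma len_pos_of_first_ne_last {w : GWalk G} (h : w.first ≠ w.last) : 0 < w.len :=
  Nat.pos_of_ne_zero fun h0 => h (by simp [first, last, h0])

def reverse (w : GWalk G) (hsym : ∀ a b, (G.mark a b).isSome → (G.mark b a).isSome) :
    GWalk G where
  len := w.len
  f k := w.f (w.len - k)
  hadj i hi := by
    have h := hsym _ _ (w.hadj (w.len - (i + 1)) (by omega))
    rwa [show w.len - (i + 1) + 1 = w.len - i by omega] at h

def take (w : GWalk G) (n : ℕ) (hn : n ≤ w.len) : GWalk G where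
  len := n
  f := w.f
  hadj i hi := w.hadj i (by omega)

def drop (w : GWalk G) (n : ℕ) : GWalk G where
  len := w.len - n
  f k := w.f (n + k)
  hadj i hi := by
    rw [← Nat.add_assoc]
    exact w.hadj _ (by omega)

def append (w₁ w₂ : GWalk G) (h : w₁.last = w₂.first) : GWalk G where
  len := w₁.len + w₂.len
  f k := if k ≤ w₁.len then w₁.f k else w₂.f (k - w₁.len)
  hadj k hk := by
    by_cases hk₁ : k + 1 ≤ w₁.len
    · simp only [if_pos hk₁, if_pos (Nat.le_of_succ_le hk₁)]
      exact w₁.hadj k hk₁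
    · have hf :
          (if k ≤ w₁.len then w₁.f k else w₂.f (k - w₁.len)) = w₂.f (k - w₁.len) := by
        split_ifs with hk'
        · rw [show k = w₁.len by omega, Nat.sub_self]
          exact h
        · rfl
      rw [hf, if_neg hk₁, show k + 1 - w₁.len = k - w₁.len + 1 by omega]
      exact w₂.hadj _ (by omega)

variable {hsym : ∀ a b, (G.mark a b).isSome → (G.mark b a).isSome}

@[simp] lemma reverse_len (w : GWalk G) : (w.reverse hsym).len = w.len := rfl

@[simp] lemma reverse_f (w : GWalk G) (k : ℕ) : (w.reverse hsym).f k = w.f (w.len - k) := rfl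

lemma reverse_first (w : GWalk G) : (w.reverse hsym).first = w.last := by
  simp [first, last]

lemma reverse_last (w : GWalk G) : (w.reverse hsym).last = w.first := by
  simp [first, last]

lemma IsPath.reverse {w : GWalk G} (hp : w.IsPath) : (w.reverse hsym).IsPath := by
  intro i hi j hj hij
  simp only [reverse_len] at hi hj
  have := hp _ (Nat.sub_le w.len i) _ (Nat.sub_le w.len j) hij
  omega

lemma drop_last (w : GWalk G) {n : ℕ} (hn : n ≤ w.len) : (w.drop n).last = w.last := by
  simp only [drop, last, Nat.add_sub_cancel' hn]

variable {w₁ w₂ : GWalk G}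

@[simp] lemma append_len (h : w₁.last = w₂.first) :
    (w₁.append w₂ h).len = w₁.len + w₂.len := rfl

lemma append_f_of_le (h : w₁.last = w₂.first) {k : ℕ} (hk : k ≤ w₁.len) :
    (w₁.append w₂ h).f k = w₁.f k := if_pos hk

lemma append_f_of_ge (h : w₁.last = w₂.first) {k : ℕ} (hk : w₁.len ≤ k) :
    (w₁.append w₂ h).f k = w₂.f (k - w₁.len) := by
  rcases hk.eq_or_lt with rfl | hk
  · rw [append_f_of_le h le_rfl, Nat.sub_self]
    exact h
  · exact if_neg (by omega)

lemma append_first (h : w₁.last = w₂.first) : (w₁.append w₂ h).first = w₁.first :=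
  append_f_of_le h (Nat.zero_le _)

lemma append_last (h : w₁.last = w₂.first) : (w₁.append w₂ h).last = w₂.last := by
  simp only [last, append_len, append_f_of_ge h (Nat.le_add_right _ _), Nat.add_sub_cancel_left]

end GWalk

namespace MixedGraph

open GWalk

variable {N : Type} {G : MixedGraph N} {L S T T' : Set N} {w : GWalk G}

lemma subset_ancSet : T ⊆ G.ancSet T := fun x hx => ⟨x, hx, .refl⟩

lemma mem_ancSet_of_anc {x y : N} (h : G.anc x y) (hy : y ∈ G.ancSet T) : x ∈ G.ancSet T := by
  obtain ⟨s, hs, hys⟩ := hy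
  exact ⟨s, hs, h.trans hys⟩

lemma ancSet_subset_ancSet (h : T ⊆ G.ancSet T') : G.ancSet T ⊆ G.ancSet T' :=
  fun _ ⟨_, hs, hxs⟩ => mem_ancSet_of_anc hxs (h hs)

lemma ancSet_mono (h : T ⊆ T') : G.ancSet T ⊆ G.ancSet T' :=
  ancSet_subset_ancSet (h.trans subset_ancSet)

lemma anc_antisymm (hacyc : ∀ a b, G.dir a b → ¬ G.anc b a) {a b : N}
    (hab : G.anc a b) (hba : G.anc b a) : a = b := by
  rcases hab.cases_head with h | ⟨c, hac, hcb⟩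
  · exact h
  · exact absurd (hcb.trans hba) (hacyc a c hac)

lemma eq_of_anc_of_mem_inputs (hinp : ∀ a ∈ G.inputs, ∀ b, G.mark a b ≠ some .arrow)
    {x s : N} (h : G.anc x s) (hs : s ∈ G.inputs) : x = s := by
  rcases h.cases_tail with h | ⟨c, -, hcs⟩
  · exact h.symm
  · exact absurd hcs.2 (hinp s hs c)

lemma dir_of_mark_ne_arrow (htri : ∀ a b, G.adj a b → G.dir a b ∨ G.dir b a ∨ G.bidir a b)
    {a b : N} (hadj : G.adj a b) (h : G.mark a b ≠ some .arrow) : G.dir a b := by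
  rcases htri a b hadj with h' | h' | h'
  · exact h'
  · exact absurd h'.2 h
  · exact absurd h'.1 h

lemma WF.ne_of_adj (hG : G.WF) {a b : N} (h : G.adj a b) : a ≠ b := by
  rintro rfl
  simp [adj, hG.2.2.2.2.1 a] at h

lemma adj_of_mark_eq_some {a b : N} {m : Mark} (h : G.mark a b = some m) : G.adj a b := by
  simp [adj, h]

def InducingNode (G : MixedGraph N) (L T : Set N) (x y z : N) : Prop :=
  (y ∈ L ∨ G.mark y x = some .arrow ∧ G.mark y z = some .arrow) ∧
  (G.mark y x = some .arrow ∧ G.mark y z = some .arrow → y ∈ G.ancSet T)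

/-- An `(L,S)`-inducing walk with the ancestral target `{first, last} ∪ S` replaced by a
fixed set `T`, which makes the notion stable under cutting and gluing walks. -/
def InducingWalkWrt (G : MixedGraph N) (L T : Set N) (w : GWalk G) : Prop :=
  ∀ i, 0 < i → i < w.len → G.InducingNode L T (w.f (i - 1)) (w.f i) (w.f (i + 1))

lemma inducingWalk_iff :
    G.InducingWalk L S w ↔ G.InducingWalkWrt L ({w.first, w.last} ∪ S) w :=
  ⟨fun h i h0 hi => ⟨h.1 i h0 hi, h.2 i h0 hi⟩,
    fun h => ⟨fun i h0 hi => (h i h0 hi).1, fun i h0 hi => (h i h0 hi).2⟩⟩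

lemma InducingNode.symm {x y z : N} (h : G.InducingNode L T x y z) :
    G.InducingNode L T z y x :=
  ⟨h.1.imp_right And.symm, fun hc => h.2 hc.symm⟩

lemma InducingNode.mono {x y z : N} (h : G.InducingNode L T x y z) (hT : T ⊆ G.ancSet T') :
    G.InducingNode L T' x y z :=
  ⟨h.1, fun hc => ancSet_subset_ancSet hT (h.2 hc)⟩

namespace InducingWalkWrt

lemma mono (hw : G.InducingWalkWrt L T w) (hT : T ⊆ G.ancSet T') :
    G.InducingWalkWrt L T' w :=
  fun i h0 hi => (hw i h0 hi).mono hT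

lemma reverse {hsym : ∀ a b, (G.mark a b).isSome → (G.mark b a).isSome}
    (hw : G.InducingWalkWrt L T w) : G.InducingWalkWrt L T (w.reverse hsym) := by
  intro i h0 hi
  simp only [reverse_len] at hi
  simp only [reverse_f]
  rw [show w.len - (i - 1) = w.len - i + 1 by omega,
    show w.len - (i + 1) = w.len - i - 1 by omega]
  exact (hw _ (by omega) (by omega)).symm

lemma take (hw : G.InducingWalkWrt L T w) {n : ℕ} (hn : n ≤ w.len) :
    G.InducingWalkWrt L T (w.take n hn) :=
  fun i h0 hi => hw i h0 (by simp only [GWalk.take] at hi; omega)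

lemma drop (hw : G.InducingWalkWrt L T w) (n : ℕ) : G.InducingWalkWrt L T (w.drop n) := by
  intro i h0 hi
  simp only [GWalk.drop] at hi ⊢
  rw [show n + (i - 1) = n + i - 1 by omega, ← Nat.add_assoc]
  exact hw _ (by omega) (by omega)

lemma append {w₁ w₂ : GWalk G} (h₁ : G.InducingWalkWrt L T w₁)
    (h₂ : G.InducingWalkWrt L T w₂) (h : w₁.last = w₂.first)
    (hjoin : 0 < w₁.len → 0 < w₂.len →
      G.InducingNode L T (w₁.f (w₁.len - 1)) w₁.last (w₂.f 1)) :
    G.InducingWalkWrt L T (w₁.append w₂ h) := by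
  intro k h0 hk
  rw [append_len] at hk
  rcases lt_trichotomy k w₁.len with hlt | rfl | hgt
  · rw [append_f_of_le h (by omega), append_f_of_le h hlt.le, append_f_of_le h hlt]
    exact h₁ k h0 hlt
  · rw [append_f_of_le h (by omega), append_f_of_le h le_rfl, append_f_of_ge h (by omega),
      Nat.add_sub_cancel_left]
    exact hjoin h0 (by omega)
  · rw [append_f_of_ge h (by omega), append_f_of_ge h hgt.le, append_f_of_ge h (by omega),
      show k - 1 - w₁.len = k - w₁.len - 1 by omega,
      show k + 1 - w₁.len = k - w₁.len + 1 by omega]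
    exact h₂ _ (by omega) (by omega)

end InducingWalkWrt

lemma InducingWalk.reverse {hsym : ∀ a b, (G.mark a b).isSome → (G.mark b a).isSome}
    (hw : G.InducingWalk L S w) : G.InducingWalk L S (w.reverse hsym) := by
  rw [inducingWalk_iff, reverse_first, reverse_last, Set.pair_comm]
  exact (inducingWalk_iff.1 hw).reverse

lemma InducingPathBtw.symm (hsym : ∀ a b, (G.mark a b).isSome → (G.mark b a).isSome)
    {a b : N} (h : G.InducingPathBtw L S a b) : G.InducingPathBtw L S b a := by
  obtain ⟨w, hp, rfl, rfl, hw⟩ := h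
  exact ⟨w.reverse hsym, hp.reverse, reverse_first w, reverse_last w, hw.reverse⟩

theorem exists_anc_collider_or_last_of_dir
    (htri : ∀ a b, G.adj a b → G.dir a b ∨ G.dir b a ∨ G.bidir a b) (w : GWalk G)
    {i : ℕ} (hi : i < w.len) (hdir : G.dir (w.f i) (w.f (i + 1))) :
    ∃ j, i < j ∧ j ≤ w.len ∧ G.anc (w.f i) (w.f j) ∧
      (j = w.len ∨ j < w.len ∧ w.ColliderAt j) := by
  by_cases hlast : i + 1 = w.len
  · exact ⟨i + 1, by omega, hi, .single hdir, .inl hlast⟩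
  by_cases hcol : w.ColliderAt (i + 1)
  · exact ⟨i + 1, by omega, by omega, .single hdir, .inr ⟨by omega, hcol⟩⟩
  have hnext : G.dir (w.f (i + 1)) (w.f (i + 1 + 1)) :=
    dir_of_mark_ne_arrow htri (w.hadj _ (by omega)) fun h => hcol ⟨hdir.2, h⟩
  obtain ⟨j, hij, hj, hanc, hend⟩ := exists_anc_collider_or_last_of_dir htri w (by omega) hnext
  exact ⟨j, by omega, hj, .head hdir hanc, hend⟩
termination_by w.len - i

lemma InducingWalkWrt.mem_ancSet_of_dir
    (htri : ∀ a b, G.adj a b → G.dir a b ∨ G.dir b a ∨ G.bidir a b)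
    (hw : G.InducingWalkWrt L T w) (hlast : w.last ∈ G.ancSet T) {i : ℕ} (hi : i < w.len)
    (hdir : G.dir (w.f i) (w.f (i + 1))) : w.f i ∈ G.ancSet T := by
  obtain ⟨j, hij, -, hanc, rfl | ⟨hj, hcol⟩⟩ :=
    exists_anc_collider_or_last_of_dir htri w hi hdir
  · exact mem_ancSet_of_anc hanc hlast
  · exact mem_ancSet_of_anc hanc ((hw j (by omega) hj).2 hcol)

lemma InducingWalkWrt.take_append_drop
    (htri : ∀ a b, G.adj a b → G.dir a b ∨ G.dir b a ∨ G.bidir a b)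
    (hw : G.InducingWalkWrt L T w) (hlast : w.last ∈ G.ancSet T) {i j : ℕ} (hij : i < j)
    (hj : j ≤ w.len) (heq : w.f i = w.f j) :
    G.InducingWalkWrt L T ((w.take i (hij.le.trans hj)).append (w.drop j) heq) := by
  refine (hw.take _).append (hw.drop j) heq fun hi hj' => ?_
  simp only [GWalk.take, GWalk.drop, GWalk.last] at hi hj' ⊢
  have hnode_i := hw i hi (by omega)
  have hnode_j := hw j (by omega) (by omega)
  rw [← heq] at hnode_j
  refine ⟨?_, fun hcol => ?_⟩
  · by_cases hL : w.f i ∈ L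
    · exact .inl hL
    · exact .inr ⟨(hnode_i.1.resolve_left hL).1, (hnode_j.1.resolve_left hL).2⟩
  · by_cases hcol_i : G.mark (w.f i) (w.f (i + 1)) = some .arrow
    · exact hnode_i.2 ⟨hcol.1, hcol_i⟩
    · exact hw.mem_ancSet_of_dir htri hlast (by omega)
        (dir_of_mark_ne_arrow htri (w.hadj i (by omega)) hcol_i)

theorem exists_isPath_of_inducingWalkWrt
    (htri : ∀ a b, G.adj a b → G.dir a b ∨ G.dir b a ∨ G.bidir a b) (w : GWalk G)
    (hw : G.InducingWalkWrt L T w) (hlast : w.last ∈ G.ancSet T) :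
    ∃ w' : GWalk G, w'.IsPath ∧ w'.first = w.first ∧ w'.last = w.last ∧
      G.InducingWalkWrt L T w' := by
  by_cases hp : w.IsPath
  · exact ⟨w, hp, rfl, rfl, hw⟩
  obtain ⟨i, j, hij, hj, heq⟩ : ∃ i j, i < j ∧ j ≤ w.len ∧ w.f i = w.f j := by
    simp only [GWalk.IsPath, not_forall] at hp
    obtain ⟨i, hi, j, hj, heq, hne⟩ := hp
    rcases lt_or_gt_of_ne hne with h | h
    · exact ⟨i, j, h, hj, heq⟩
    · exact ⟨j, i, h, hi, heq.symm⟩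
  have hfirst := append_first (w₁ := w.take i (hij.le.trans hj)) (w₂ := w.drop j) heq
  have hlast' := (append_last (w₁ := w.take i (hij.le.trans hj)) (w₂ := w.drop j) heq).trans
    (w.drop_last hj)
  obtain ⟨v, hv, hvf, hvl, hvw⟩ := exists_isPath_of_inducingWalkWrt htri _
    (hw.take_append_drop htri hlast hij hj heq) (hlast' ▸ hlast)
  exact ⟨v, hv, hvf.trans hfirst, hvl.trans hlast', hvw⟩
termination_by w.len
decreasing_by simp only [append_len, GWalk.take, GWalk.drop]; omega

lemma InducingWalk.mem_ancSet_of_dir_first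
    (htri : ∀ a b, G.adj a b → G.dir a b ∨ G.dir b a ∨ G.bidir a b)
    (hacyc : ∀ a b, G.dir a b → ¬ G.anc b a) (hp : w.IsPath) (hw : G.InducingWalk L S w)
    (hlen : 0 < w.len) (hdir : G.dir w.first (w.f 1)) :
    w.first ∈ G.ancSet ({w.last} ∪ S) := by
  obtain ⟨j, hj0, hj, hanc, rfl | ⟨hjlen, hcol⟩⟩ :=
    exists_anc_collider_or_last_of_dir htri w hlen hdir
  · exact mem_ancSet_of_anc hanc (subset_ancSet (Or.inl rfl))
  · obtain ⟨s, (rfl | rfl) | hs, hjs⟩ := hw.2 j hj0 hjlen hcol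
    · have := hp j hj 0 (Nat.zero_le _) (anc_antisymm hacyc hjs hanc)
      omega
    · exact ⟨_, Or.inl rfl, hanc.trans hjs⟩
    · exact ⟨s, Or.inr hs, hanc.trans hjs⟩

lemma InducingWalk.mark_first_eq_arrow
    (htri : ∀ a b, G.adj a b → G.dir a b ∨ G.dir b a ∨ G.bidir a b)
    (hacyc : ∀ a b, G.dir a b → ¬ G.anc b a) (hp : w.IsPath) (hw : G.InducingWalk L S w)
    (hlen : 0 < w.len) (h : w.first ∉ G.ancSet ({w.last} ∪ S)) :
    G.mark w.first (w.f 1) = some .arrow :=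
  by_contra fun hne => h (hw.mem_ancSet_of_dir_first htri hacyc hp hlen
    (dir_of_mark_ne_arrow htri (w.hadj 0 hlen) hne))

lemma InducingWalk.mark_last_eq_arrow
    (htri : ∀ a b, G.adj a b → G.dir a b ∨ G.dir b a ∨ G.bidir a b)
    (hacyc : ∀ a b, G.dir a b → ¬ G.anc b a)
    (hsym : ∀ a b, (G.mark a b).isSome → (G.mark b a).isSome) (hp : w.IsPath)
    (hw : G.InducingWalk L S w) (hlen : 0 < w.len) (h : w.last ∉ G.ancSet ({w.first} ∪ S)) :
    G.mark w.last (w.f (w.len - 1)) = some .arrow :=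
  (hw.reverse (hsym := hsym)).mark_first_eq_arrow htri hacyc hp.reverse hlen
    (by rwa [reverse_first, reverse_last])

lemma not_inducingPathBtw_of_mem_inputs
    (hinp : ∀ a ∈ G.inputs, ∀ b, G.mark a b ≠ some .arrow) {a b : N} (ha : a ∈ G.inputs)
    (hb : b ∈ G.inputs) (hab : a ≠ b) (hnadj : ¬ G.adj a b) :
    ¬ G.InducingPathBtw ∅ ∅ a b := by
  rintro ⟨w, hp, rfl, rfl, hw⟩
  have hlen : 1 < w.len := by
    rcases Nat.lt_or_ge 1 w.len with h | h
    · exact h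
    · interval_cases h' : w.len
      · exact absurd (by simp [first, last, h']) hab
      · exact absurd (by simpa [first, last, h'] using w.hadj 0 (by omega)) hnadj
  obtain ⟨s, (rfl | rfl) | hs, h1s⟩ := hw.2 1 one_pos hlen
    ((hw.1 1 one_pos hlen).resolve_left (Set.notMem_empty _))
  · have := hp 1 hlen.le 0 (Nat.zero_le _) (eq_of_anc_of_mem_inputs hinp h1s ha)
    omega
  · have := hp 1 hlen.le w.len le_rfl (eq_of_anc_of_mem_inputs hinp h1s hb)
    omega
  · exact hs.elim

end MixedGraph

namespace RepresentsLS

open MixedGraph GWalk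

variable {N : Type} {A : LSADMG N} {P Q : MixedGraph N} {w : GWalk P}

lemma ancSet_subset (hP : RepresentsLS P A) (T : Set N) :
    P.ancSet T ⊆ A.graph.ancSet (T ∪ A.sel) := by
  rintro x ⟨s, hs, hxs⟩
  refine ancSet_mono (Set.union_subset_union_left _ (Set.singleton_subset_iff.2 hs)) ?_
  induction hxs using Relation.ReflTransGen.head_induction_on with
  | refl => exact subset_ancSet (Or.inl rfl)
  | head hxy _ ih =>
    refine ancSet_subset_ancSet (Set.union_subset (Set.singleton_subset_iff.2 ih) ?_)
      (hP.2.2.2.2 _ _ hxy.1)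
    exact Set.subset_union_right.trans subset_ancSet

lemma not_anc_of_mark_eq_arrow (hP : RepresentsLS P A) {a b : N}
    (h : P.mark a b = some .arrow) : ¬ P.anc a b :=
  fun hab => hP.2.2.2.1 a b h (hP.ancSet_subset {b} ⟨b, rfl, hab⟩)

lemma mem_ancSet_sel_of_undir (hacyc : ∀ a b, A.graph.dir a b → ¬ A.graph.anc b a)
    (hP : RepresentsLS P A) {b c : N} (hbc : b ≠ c) (h : P.undir b c) :
    b ∈ A.graph.ancSet A.sel := by
  obtain ⟨s, hs | hs, hbs⟩ := hP.2.2.2.2 b c h.1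
  · obtain rfl : s = c := hs
    obtain ⟨t, ht | ht, hst⟩ := hP.2.2.2.2 s b h.2
    · exact absurd (anc_antisymm hacyc hbs (ht ▸ hst)) hbc
    · exact ⟨t, ht, hbs.trans hst⟩
  · exact ⟨s, hs, hbs⟩

lemma inducingPathBtw_of_adj (hPw : P.WF) (hP : RepresentsLS P A) {a b : N}
    (h : P.adj a b) :
    ¬(a ∈ P.inputs ∧ b ∈ P.inputs) ∧ A.graph.InducingPathBtw A.latent A.sel a b :=
  (hP.2.2.1 a b (hPw.ne_of_adj h) (hPw.2.2.2.2.2 a b h).1 (hPw.2.2.2.2.2 a b h).2).1 h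

lemma mark_ne_arrow_of_mem_inputs (hG : A.graph.IsIADMG) (hPw : P.WF) (hP : RepresentsLS P A)
    {a : N} (ha : a ∈ P.inputs) (b : N) : P.mark a b ≠ some .arrow := by
  obtain ⟨-, htri, hacyc, hinp, -⟩ := hG
  intro h
  have hadj := adj_of_mark_eq_some h
  obtain ⟨-, p, hp, rfl, rfl, hpw⟩ := hP.inducingPathBtw_of_adj hPw hadj
  have hlen := len_pos_of_first_ne_last (hPw.ne_of_adj hadj)
  exact hinp _ (hP.1 ▸ ha) _ (hpw.mark_first_eq_arrow htri hacyc hp hlen (hP.2.2.2.1 _ _ h))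

lemma mem_ancSet_of_inducingWalk (hP : RepresentsLS P A) (hw : P.InducingWalk ∅ ∅ w)
    {k : ℕ} (hk : k ≤ w.len) : w.f k ∈ A.graph.ancSet ({w.first, w.last} ∪ A.sel) := by
  rcases Nat.eq_zero_or_pos k with rfl | h0
  · exact subset_ancSet (Or.inl (Or.inl rfl))
  rcases hk.eq_or_lt with rfl | hk
  · exact subset_ancSet (Or.inl (Or.inr rfl))
  have h := hP.ancSet_subset _ (hw.2 k h0 hk ((hw.1 k h0 hk).resolve_left (Set.notMem_empty _)))
  rwa [Set.union_empty] at h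

lemma exists_inducingPath_of_edge (hG : A.graph.IsIADMG) (hPw : P.WF)
    (hP : RepresentsLS P A) (hw : P.InducingWalk ∅ ∅ w) {k : ℕ} (hk : k < w.len) :
    ∃ q : GWalk A.graph, q.first = w.f k ∧ q.last = w.f (k + 1) ∧ 0 < q.len ∧
      (0 < k → A.graph.mark (w.f k) (q.f 1) = some .arrow) ∧
      (k + 1 < w.len → A.graph.mark (w.f (k + 1)) (q.f (q.len - 1)) = some .arrow) ∧
      A.graph.InducingWalkWrt A.latent ({w.first, w.last} ∪ A.sel) q := by
  obtain ⟨⟨-, -, -, hsym, -⟩, htri, hacyc, -⟩ := hG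
  have hcol : ∀ i, 0 < i → i < w.len → w.ColliderAt i := fun i h0 hi =>
    (hw.1 i h0 hi).resolve_left (Set.notMem_empty _)
  obtain ⟨-, q, hq, hqf, hql, hqw⟩ := hP.inducingPathBtw_of_adj hPw (w.hadj k hk)
  have hqlen := len_pos_of_first_ne_last (hqf ▸ hql ▸ hPw.ne_of_adj (w.hadj k hk))
  refine ⟨q, hqf, hql, hqlen, fun h0 => ?_, fun hk1 => ?_, ?_⟩
  · rw [← hqf]
    refine hqw.mark_first_eq_arrow htri hacyc hq hqlen ?_
    rw [hqf, hql]
    exact hP.2.2.2.1 _ _ (hcol k h0 hk).2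
  · rw [← hql]
    refine hqw.mark_last_eq_arrow htri hacyc hsym hq hqlen ?_
    rw [hqf, hql]
    exact hP.2.2.2.1 _ _ (hcol (k + 1) (by omega) hk1).1
  · refine (inducingWalk_iff.1 hqw).mono (Set.union_subset ?_ (Set.subset_union_right.trans
      subset_ancSet))
    rintro x (rfl | rfl)
    · exact hqf ▸ hP.mem_ancSet_of_inducingWalk hw hk.le
    · exact hql ▸ hP.mem_ancSet_of_inducingWalk hw hk

lemma exists_inducingWalkWrt (hG : A.graph.IsIADMG) (hPw : P.WF) (hP : RepresentsLS P A)
    (hw : P.InducingWalk ∅ ∅ w) (hlen : 0 < w.len) :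
    ∃ W : GWalk A.graph, W.first = w.first ∧ W.last = w.last ∧
      A.graph.InducingWalkWrt A.latent ({w.first, w.last} ∪ A.sel) W := by
  suffices h : ∀ m, 1 ≤ m → m ≤ w.len → ∃ W : GWalk A.graph, W.first = w.first ∧
      W.last = w.f m ∧ 0 < W.len ∧
      (m < w.len → A.graph.mark (w.f m) (W.f (W.len - 1)) = some .arrow) ∧
      A.graph.InducingWalkWrt A.latent ({w.first, w.last} ∪ A.sel) W by
    obtain ⟨W, hWf, hWl, -, -, hW⟩ := h w.len hlen le_rfl
    exact ⟨W, hWf, hWl, hW⟩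
  intro m hm
  induction m, hm using Nat.le_induction with
  | base =>
    intro h1
    obtain ⟨q, hqf, hql, hqlen, -, hqarr, hq⟩ := hP.exists_inducingPath_of_edge hG hPw hw h1
    exact ⟨q, hqf, hql, hqlen, hqarr, hq⟩
  | succ m hm ih =>
    intro hm1
    obtain ⟨W, hWf, hWl, hWlen, hWarr, hW⟩ := ih (by omega)
    obtain ⟨q, hqf, hql, hqlen, hqarr₀, hqarr₁, hq⟩ :=
      hP.exists_inducingPath_of_edge hG hPw hw (k := m) (by omega)
    have hjoin : W.last = q.first := hWl.trans hqf.symm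
    refine ⟨W.append q hjoin, (append_first hjoin).trans hWf, (append_last hjoin).trans hql,
      by rw [append_len]; omega, fun h => ?_, hW.append hq hjoin fun _ _ => ?_⟩
    · rw [append_len, append_f_of_ge hjoin (by omega),
        show W.len + q.len - 1 - W.len = q.len - 1 by omega]
      exact hqarr₁ h
    · rw [hWl]
      exact ⟨.inr ⟨hWarr (by omega), hqarr₀ (by omega)⟩,
        fun _ => hP.mem_ancSet_of_inducingWalk hw (by omega)⟩

lemma not_inducingPathBtw (hG : A.graph.IsIADMG) (hPw : P.WF) (hP : RepresentsLS P A)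
    {a b : N} (hab : a ≠ b) (ha : a ∈ P.nodes) (hb : b ∈ P.nodes) (hnadj : ¬ P.adj a b) :
    ¬ P.InducingPathBtw ∅ ∅ a b := by
  rintro ⟨w, hp, rfl, rfl, hw⟩
  by_cases hII : w.first ∈ P.inputs ∧ w.last ∈ P.inputs
  · exact not_inducingPathBtw_of_mem_inputs
      (fun _ hx => hP.mark_ne_arrow_of_mem_inputs hG hPw hx) hII.1 hII.2 hab hnadj
      ⟨w, hp, rfl, rfl, hw⟩
  obtain ⟨W, hWf, hWl, hW⟩ :=
    hP.exists_inducingWalkWrt hG hPw hw (len_pos_of_first_ne_last hab)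
  obtain ⟨W', hW'p, hW'f, hW'l, hW'⟩ := exists_isPath_of_inducingWalkWrt hG.2.1 W hW
    (hWl ▸ subset_ancSet (Or.inl (Or.inr rfl)))
  rw [← hWf, ← hW'f, ← hWl, ← hW'l] at hW'
  exact hnadj ((hP.2.2.1 _ _ hab ha hb).2
    ⟨hII, W', hW'p, hW'f.trans hWf, hW'l.trans hWl, inducingWalk_iff.2 hW'⟩)

theorem isIPAG (hG : A.graph.IsIADMG) (hPw : P.WF) (hP : RepresentsLS P A) : P.IsIPAG := by
  refine ⟨hPw, fun a ha => hP.mark_ne_arrow_of_mem_inputs hG hPw ha,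
    fun a ha b hb hab => (hP.inducingPathBtw_of_adj hPw hab).1 ⟨ha, hb⟩,
    fun a b hab => hP.not_anc_of_mark_eq_arrow hab.2,
    fun a b hab hba => hP.not_anc_of_mark_eq_arrow hba.2 hab,
    fun a b c hba hbc => ?_,
    fun a b hab ha hb => hP.not_inducingPathBtw hG hPw hab ha hb⟩
  have hb := hP.mem_ancSet_sel_of_undir hG.2.2.1
    (hPw.ne_of_adj (adj_of_mark_eq_some hbc.1)) hbc
  exact hP.2.2.2.1 b a hba (ancSet_mono Set.subset_union_right hb)

lemma adj_iff_adj (hPw : P.WF) (hQw : Q.WF) (hP : RepresentsLS P A) (hQ : RepresentsLS Q A)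
    (a b : N) : P.adj a b ↔ Q.adj a b := by
  have hnodes : P.nodes = Q.nodes := by
    rw [nodes, nodes, hP.1, hP.2.1, hQ.1, hQ.2.1]
  by_cases hab : a = b
  · subst hab
    simp [adj, hPw.2.2.2.2.1, hQw.2.2.2.2.1]
  by_cases hn : a ∈ P.nodes ∧ b ∈ P.nodes
  · rw [hP.2.2.1 a b hab hn.1 hn.2, hQ.2.2.1 a b hab (hnodes ▸ hn.1) (hnodes ▸ hn.2), hP.1,
      hQ.1]
  · exact iff_of_false (fun h => hn (hPw.2.2.2.2.2 a b h))
      (fun h => hn (hnodes ▸ hQw.2.2.2.2.2 a b h))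

lemma mark_eq_ite (hP : RepresentsLS P A) (hc : ∀ a b, P.mark a b ≠ some .circle) {a b : N}
    (h : P.adj a b) : P.mark a b =
      if a ∈ A.graph.ancSet ({b} ∪ A.sel) then some .tail else some .arrow := by
  obtain ⟨m, hm⟩ := Option.isSome_iff_exists.1 h
  cases m with
  | tail => rw [hm, if_pos (hP.2.2.2.2 a b hm)]
  | arrow => rw [hm, if_neg (hP.2.2.2.1 a b hm)]
  | circle => exact absurd hm (hc a b)

theorem unique (hPw : P.WF) (hQw : Q.WF) (hP : RepresentsLS P A)
    (hQ : RepresentsLS Q A) (hPc : ∀ a b, P.mark a b ≠ some .circle)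
    (hQc : ∀ a b, Q.mark a b ≠ some .circle) : P = Q := by
  have hmark : P.mark = Q.mark := by
    funext a b
    by_cases h : P.adj a b
    · rw [hP.mark_eq_ite hPc h, hQ.mark_eq_ite hQc ((adj_iff_adj hPw hQw hP hQ a b).1 h)]
    · have h' := mt (adj_iff_adj hPw hQw hP hQ a b).2 h
      simp only [adj, Option.not_isSome_iff_eq_none] at h h'
      rw [h, h']
  cases P
  cases Q
  simp only [MixedGraph.mk.injEq]
  exact ⟨hP.1.trans hQ.1.symm, hP.2.1.trans hQ.2.1.symm, hmark⟩

end RepresentsLS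

section magOfLS

open MixedGraph

variable {N : Type} (A : LSADMG N)

lemma magOfLS_adj_iff (a b : N) : (magOfLS A).adj a b ↔
    a ≠ b ∧ a ∈ A.graph.inputs ∪ A.obs ∧ b ∈ A.graph.inputs ∪ A.obs ∧
      ¬(a ∈ A.graph.inputs ∧ b ∈ A.graph.inputs) ∧
      A.graph.InducingPathBtw A.latent A.sel a b := by
  simp only [adj, magOfLS]
  split_ifs with h <;> simp only [Option.isSome_some, Option.isSome_none, Bool.false_eq_true,
    true_iff, false_iff] <;> exact h

lemma magOfLS_represents : RepresentsLS (magOfLS A) A := by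
  refine ⟨rfl, rfl, fun a b hab ha hb => ?_, fun a b h => ?_, fun a b h => ?_⟩
  · rw [magOfLS_adj_iff]
    exact ⟨fun h => h.2.2.2, fun h => ⟨hab, ha, hb, h⟩⟩
  all_goals
    simp only [magOfLS] at h
    split_ifs at h <;> simp_all

lemma magOfLS_mark_ne_circle (a b : N) : (magOfLS A).mark a b ≠ some .circle := by
  simp only [magOfLS]
  split_ifs <;> simp

lemma magOfLS_wf (hG : A.graph.WF) : (magOfLS A).WF := by
  obtain ⟨hdisj, hIfin, hOfin, hsym, -⟩ := hG
  refine ⟨hdisj.mono_right Set.sdiff_subset, hIfin, hOfin.subset Set.sdiff_subset,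
    fun a b h => ?_, fun a => ?_, fun a b h => ?_⟩
  · obtain ⟨hab, ha, hb, hI, hp⟩ := (magOfLS_adj_iff A a b).1 h
    exact (magOfLS_adj_iff A b a).2
      ⟨hab.symm, hb, ha, fun h => hI ⟨h.2, h.1⟩, hp.symm hsym⟩
  · simpa [adj] using mt (magOfLS_adj_iff A a a).1
  · obtain ⟨-, ha, hb, -⟩ := (magOfLS_adj_iff A a b).1 h
    exact ⟨ha, hb⟩

end magOfLS

/-- Let `A = (I,O,L,S,E)` be an ilsADMG.  Then there exists exactly
one iMAG that represents `A`, namely the explicitly described graph `magOfLS A`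
(input nodes `I`, output nodes `O`; distinct `a,b ∈ I ∪ O` adjacent iff
`{a,b} ⊄ I` and there is an `(L,S)`-inducing path between them in `A`; on each
edge the mark at `a` is a tail if `a ∈ Anc_A({b} ∪ S)` and an arrowhead otherwise). -/
theorem statement0 {N : Type} (A : LSADMG N) (hA : A.WF) :
    ((magOfLS A).IsIMAG ∧ RepresentsLS (magOfLS A) A) ∧
      (∀ M : MixedGraph N, M.IsIMAG → RepresentsLS M A → M = magOfLS A) := by
  have hrep := magOfLS_represents A
  have hwf := magOfLS_wf A hA.1.1
  exact ⟨⟨⟨hrep.isIPAG hA.1 hwf, magOfLS_mark_ne_circle A⟩, hrep⟩, fun M hM hMrep =>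
    hMrep.unique hM.1.1 hwf hrep hM.2 (magOfLS_mark_ne_circle A)⟩

end
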